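/- For m ≥ 2, the set S = {v₁₁, v₂₁, v₃ₘ} is a resolving set for (K₃ × Pₘ) ⊙ K₁, where v_{ij} = (v_i, u_j) with v₁,v₂,v₃ the vertices of K₃ and u₁,…,uₘ the vertices of Pₘ. -/

import Mathlib

open SimpleGraph

/-- Corona `G ⊙ K₁`: attach to each vertex `v` (as `Sum.inl v`) a pendant vertex `Sum.inr v`. -/
def corona {V : Type*} (G : SimpleGraph V) : SimpleGraph (V ⊕ V) :=
  SimpleGraph.fromRel (fun a b =>
    match a, b with
    | Sum.inl x, Sum.inl y => G.Adj x y
    | Sum.inl x, Sum.inr y => x = y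
    | _, _ => False)

/-- `S` is a resolving set for `G`: distinct vertices have distinct distance vectors to `S`. -/
def IsResolving {V : Type*} (G : SimpleGraph V) (S : Set V) : Prop :=
  ∀ u v : V, (∀ s ∈ S, G.dist u s = G.dist v s) → u = v

/-- Metric dimension: minimum cardinality of a resolving set. -/
noncomputable def metricDim {V : Type*} [Fintype V] (G : SimpleGraph V) : ℕ :=
  sInf {k | ∃ S : Finset V, S.card = k ∧ IsResolving G (↑S : Set V)}

/-!
In the corona, the distance from a vertex to a landmark `inl y` is the distance from its base
vertex to `y` in `K₃ □ Pₘ`, plus one for a pendant vertex, and in `K₃ □ Pₘ` the distance from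
`(i, j)` to `(a, b)` is `[i ≠ a] + |j - b|`. For a vertex at level `e` over `(i, j)`, the distances
to `v₁₁` and `v₂₁` differ only in their `K₃` terms, which pins down `i`; the distances to `v₁₁` and
`v₃ₘ` are then `j + e` and `(m - 1 - j) + e` up to known constants, and their sum determines `e`,
hence `j`.
-/

namespace SimpleGraph

variable {V : Type*} {G : SimpleGraph V}

lemma Walk.le_add_length_of_adj {f : V → ℕ} (hf : ∀ ⦃u v⦄, G.Adj u v → f u ≤ f v + 1)
    {u v : V} (p : G.Walk u v) : f u ≤ f v + p.length := by
  induction p with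
  | nil => simp
  | cons h _ ih => have := hf h; simp only [Walk.length_cons]; omega

lemma Reachable.le_add_dist_of_adj {f : V → ℕ} (hf : ∀ ⦃u v⦄, G.Adj u v → f u ≤ f v + 1)
    {u v : V} (h : G.Reachable u v) : f u ≤ f v + G.dist u v := by
  obtain ⟨p, hp⟩ := h.exists_walk_length_eq_dist
  exact hp ▸ p.le_add_length_of_adj hf

lemma dist_boxProd {W : Type*} {H : SimpleGraph W} (hG : G.Preconnected) (hH : H.Preconnected)
    (x y : V × W) : (G □ H).dist x y = G.dist x.1 y.1 + H.dist x.2 y.2 := by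
  rw [dist, edist_boxProd, ← (hG _ _).coe_dist_eq_edist, ← (hH _ _).coe_dist_eq_edist]
  norm_cast

lemma pathGraph_dist {n : ℕ} (i j : Fin n) : (pathGraph n).dist i j = Nat.dist i j := by
  refine le_antisymm ?_ ?_
  · wlog hij : i ≤ j generalizing i j
    · rw [dist_comm, Nat.dist_comm]
      exact this j i (le_of_not_ge hij)
    obtain ⟨k, hk⟩ : ∃ k, (j : ℕ) = i + k := ⟨j - i, by omega⟩
    rw [Nat.dist_eq_sub_of_le hij, hk, Nat.add_sub_cancel_left]
    clear hij
    induction k generalizing j with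
    | zero => simp [Fin.ext hk]
    | succ k ih =>
      let j' : Fin n := ⟨i + k, by omega⟩
      have hadj : (pathGraph n).Adj j' j := by simp only [pathGraph_adj, j', hk]; omega
      calc (pathGraph n).dist i j ≤ (pathGraph n).dist i j' + (pathGraph n).dist j' j :=
            hadj.reachable.dist_triangle_right i
        _ ≤ k + 1 := by rw [dist_eq_one_iff_adj.2 hadj]; exact Nat.add_le_add_right (ih j' rfl) 1
  · have := (pathGraph_preconnected n i j).le_add_dist_of_adj (f := fun k : Fin n => Nat.dist k j)
      (fun u v huv => by rw [pathGraph_adj] at huv; unfold Nat.dist; omega)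
    simpa using this

end SimpleGraph

open Sum

variable {V : Type*} {G : SimpleGraph V}

@[simp]
lemma corona_adj_inl_inl {x y : V} : (corona G).Adj (inl x) (inl y) ↔ G.Adj x y := by
  simp only [corona, fromRel_adj, ne_eq, inl.injEq]
  exact ⟨fun ⟨_, h⟩ => h.elim id .symm, fun h => ⟨h.ne, .inl h⟩⟩

@[simp]
lemma corona_adj_inl_inr {x y : V} : (corona G).Adj (inl x) (inr y) ↔ x = y := by
  simp [corona, fromRel_adj]

@[simp]
lemma corona_adj_inr_inl {x y : V} : (corona G).Adj (inr x) (inl y) ↔ x = y := by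
  simp [corona, fromRel_adj, eq_comm]

@[simp]
lemma corona_adj_inr_inr {x y : V} : ¬(corona G).Adj (inr x) (inr y) := by
  simp [corona, fromRel_adj]

def coronaInl (G : SimpleGraph V) : G →g corona G := ⟨inl, corona_adj_inl_inl.2⟩

lemma corona_dist_inl (hG : G.Preconnected) (x : V ⊕ V) (y : V) :
    (corona G).dist x (inl y) = x.elim (G.dist · y) (G.dist · y + 1) := by
  have hwalk : ∀ x : V ⊕ V, ∃ p : (corona G).Walk x (inl y),
      p.length = x.elim (G.dist · y) (G.dist · y + 1) := by
    have hbase (v : V) : ∃ p : (corona G).Walk (inl v) (inl y), p.length = G.dist v y := by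
      obtain ⟨p, hp⟩ := (hG v y).exists_walk_length_eq_dist
      exact ⟨p.map (coronaInl G), (Walk.length_map _ _).trans hp⟩
    rintro (v | v)
    · exact hbase v
    · obtain ⟨p, hp⟩ := hbase v
      exact ⟨.cons (corona_adj_inr_inl.2 rfl) p, by simp [hp]⟩
  obtain ⟨p, hp⟩ := hwalk x
  refine le_antisymm (hp ▸ dist_le p) ?_
  have hlip : ∀ ⦃u v : V ⊕ V⦄, (corona G).Adj u v →
      u.elim (G.dist · y) (G.dist · y + 1) ≤ v.elim (G.dist · y) (G.dist · y + 1) + 1 := by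
    rintro (u | u) (v | v) huv <;>
      simp only [corona_adj_inl_inl, corona_adj_inl_inr, corona_adj_inr_inl, corona_adj_inr_inr,
        elim_inl, elim_inr] at huv ⊢
    · simpa [dist_eq_one_iff_adj.2 huv, add_comm] using huv.reachable.dist_triangle_left y
    all_goals subst huv; omega
  simpa using Reachable.le_add_dist_of_adj hlip ⟨p⟩

lemma fin_three_eq_of_ite_add_eq {i i' : Fin 3}
    (h : (if i = 0 then 0 else 1) + (if i' = 1 then 0 else 1) =
      (if i' = 0 then 0 else 1) + (if i = 1 then 0 else 1)) : i = i' := by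
  revert i i'
  decide

lemma eq_of_landmark_dist_eq {m e e' j j' : ℕ} {i i' : Fin 3} (hj : j < m) (hj' : j' < m)
    (h₀ : (if i = 0 then 0 else 1) + Nat.dist j 0 + e =
      (if i' = 0 then 0 else 1) + Nat.dist j' 0 + e')
    (h₁ : (if i = 1 then 0 else 1) + Nat.dist j 0 + e =
      (if i' = 1 then 0 else 1) + Nat.dist j' 0 + e')
    (h₂ : (if i = 2 then 0 else 1) + Nat.dist j (m - 1) + e =
      (if i' = 2 then 0 else 1) + Nat.dist j' (m - 1) + e') :
    i = i' ∧ j = j' ∧ e = e' := by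
  obtain rfl : i = i' := fin_three_eq_of_ite_add_eq (by omega)
  simp only [Nat.dist] at h₀ h₂
  omega

theorem stmt_5 (m : ℕ) (hm : 2 ≤ m) :
    IsResolving (corona ((⊤ : SimpleGraph (Fin 3)) □ pathGraph m))
      {Sum.inl ((0 : Fin 3), (⟨0, by omega⟩ : Fin m)),
       Sum.inl ((1 : Fin 3), (⟨0, by omega⟩ : Fin m)),
       Sum.inl ((2 : Fin 3), (⟨m - 1, by omega⟩ : Fin m))} := by
  have hP := pathGraph_preconnected m
  intro u v h
  simp only [Set.mem_insert_iff, Set.mem_singleton_iff, forall_eq_or_imp, forall_eq,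
    corona_dist_inl (preconnected_top.boxProd hP), dist_boxProd preconnected_top hP, dist_top,
    pathGraph_dist] at h
  obtain ⟨h₀, h₁, h₂⟩ := h
  rcases u with ⟨i, j⟩ | ⟨i, j⟩ <;> rcases v with ⟨i', j'⟩ | ⟨i', j'⟩ <;>
    simp only [elim_inl, elim_inr] at h₀ h₁ h₂
  -- A base vertex has level `e = 0`: its equations lack the `+ e`, and `x + 0` unfolds to `x`.
  · obtain ⟨rfl, hj, -⟩ := eq_of_landmark_dist_eq (e := 0) (e' := 0) j.2 j'.2 h₀ h₁ h₂
    rw [Fin.ext hj]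
  · exact absurd (eq_of_landmark_dist_eq (e := 0) j.2 j'.2 h₀ h₁ h₂).2.2 zero_ne_one
  · exact absurd (eq_of_landmark_dist_eq (e' := 0) j.2 j'.2 h₀ h₁ h₂).2.2 one_ne_zero
  · obtain ⟨rfl, hj, -⟩ := eq_of_landmark_dist_eq j.2 j'.2 h₀ h₁ h₂
    rw [Fin.ext hj]
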